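/- arXiv:1909.04287 — 3 statements merged into one kernel-verified Lean document; each statement's English description precedes it below -/
import Mathlib

section
/- Let p ≥ 3 be prime, k = m·p^s with gcd(m,p)=1, s ≥ 0, and a ∈ ℤ_p^* with first digit a₀. Then the equation x^k = a has a solution in ℤ_p^* if and only if there exists ξ ∈ {1,...,p-1} with |ξ^k - a|_p < 1 and |a - a₀^{p^s}|_p < p^{-s}. -/
/-!
Write `k = m * p ^ s`. Since `X ^ m - b` has a unit derivative, Hensel's lemma makes every unit
that is an `m`-th power modulo `p` an `m`-th power, and Frobenius fixes residues modulo `p`; so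
the first condition is exactly what is needed to take an `m`-th root of a `p ^ s`-th root of `a`.
A unit `a` is a `p ^ s`-th power iff `a ≡ a₀ ^ p ^ s [mod p ^ (s + 1)]`. Necessity is the classical
`p ∣ y - a₀ → p ^ (s + 1) ∣ y ^ p ^ s - a₀ ^ p ^ s`. Sufficiency extracts `p`-th roots one at a
time: if `b ≡ c ^ p [mod p ^ 2]`, Hensel's lemma applies to `X ^ p - b` at the Newton-corrected
point `c + p * t`, where `b - c ^ p = p ^ 2 * t`, and lifting the exponent shows that the root is
congruent to `c` to one power of `p` fewer than `b` is to `c ^ p`, which keeps the induction going.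
-/

open Polynomial

theorem cube_dvd_add_mul_pow_sub_sub {R : Type*} [CommRing R] {p : ℕ} (hp : Odd p) (c t : R) :
    (p : R) ^ 3 ∣ (c + p * t) ^ p - c ^ p - p ^ 2 * c ^ (p - 1) * t := by
  have hgeom : (c + p * t) ^ p - c ^ p - p ^ 2 * c ^ (p - 1) * t =
      ((∑ i ∈ Finset.range p, (c + p * t) ^ i * c ^ (p - 1 - i)) - p * c ^ (p - 1)) * (p * t) := by
    have h := geom_sum₂_mul (c + p * t) c p
    rw [add_sub_cancel_left] at h
    linear_combination -h
  rw [hgeom, pow_succ]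
  exact mul_dvd_mul (odd_sq_dvd_geom_sum₂_sub c t hp) (dvd_mul_right _ _)

theorem pow_dvd_sub_of_pow_succ_dvd_pow_sub_pow {R : Type*} [CommRing R] [IsDomain R] {p : ℕ}
    (hp : Prime (p : R)) (hp1 : Odd p) {x y : R} (hxy : (p : R) ∣ x - y) (hx : ¬(p : R) ∣ x)
    {n : ℕ} (h : (p : R) ^ (n + 1) ∣ x ^ p - y ^ p) : (p : R) ^ n ∣ x - y := by
  rw [pow_dvd_iff_le_emultiplicity, emultiplicity_pow_prime_sub_pow_prime hp hp1 hxy hx] at h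
  rw [pow_dvd_iff_le_emultiplicity]
  push_cast at h
  exact (ENat.add_le_add_iff_right ENat.one_ne_top).mp h

namespace PadicInt

variable {p : ℕ} [Fact p.Prime]

theorem norm_eq_one_iff_not_dvd {x : ℤ_[p]} : ‖x‖ = 1 ↔ ¬(p : ℤ_[p]) ∣ x := by
  rw [← norm_lt_one_iff_dvd, not_lt]
  exact ⟨ge_of_eq, (norm_le_one x).antisymm⟩

theorem norm_eq_one_of_dvd_sub {x c : ℤ_[p]} (hc : ‖c‖ = 1) (h : (p : ℤ_[p]) ∣ x - c) :
    ‖x‖ = 1 := by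
  rw [norm_eq_one_iff_not_dvd] at hc ⊢
  rwa [dvd_iff_dvd_of_dvd_sub h]

theorem norm_le_inv_pow_of_dvd {x : ℤ_[p]} {n : ℕ} (h : (p : ℤ_[p]) ^ n ∣ x) :
    ‖x‖ ≤ (p : ℝ)⁻¹ ^ n := by
  obtain ⟨y, rfl⟩ := h
  rw [norm_mul, norm_pow, norm_p]
  exact mul_le_of_le_one_right (by positivity) (norm_le_one y)

theorem norm_lt_zpow_neg_iff_dvd (x : ℤ_[p]) (s : ℕ) :
    ‖x‖ < (p : ℝ) ^ (-(s : ℤ)) ↔ (p : ℤ_[p]) ^ (s + 1) ∣ x := by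
  rw [norm_lt_pow_iff_norm_le_pow_sub_one, ← Ideal.mem_span_singleton,
    ← norm_le_pow_iff_mem_span_pow]
  push_cast
  ring_nf

theorem dvd_iff_toZMod_eq_zero {x : ℤ_[p]} : (p : ℤ_[p]) ∣ x ↔ toZMod x = 0 := by
  rw [← RingHom.mem_ker, ker_toZMod, maximalIdeal_eq_span_p, Ideal.mem_span_singleton]

theorem dvd_pow_p_pow_sub_self (x : ℤ_[p]) (s : ℕ) : (p : ℤ_[p]) ∣ x ^ p ^ s - x := by
  rw [dvd_iff_toZMod_eq_zero, map_sub, map_pow, ZMod.pow_card_pow, sub_self]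

theorem dvd_pow_sub_one_sub_one_of_norm_eq_one {c : ℤ_[p]} (hc : ‖c‖ = 1) :
    (p : ℤ_[p]) ∣ c ^ (p - 1) - 1 := by
  rw [norm_eq_one_iff_not_dvd, dvd_iff_toZMod_eq_zero] at hc
  rw [dvd_iff_toZMod_eq_zero, map_sub, map_pow, map_one, ZMod.pow_card_sub_one_eq_one hc, sub_self]

theorem exists_nat_dvd_sub_of_norm_eq_one {x : ℤ_[p]} (hx : ‖x‖ = 1) :
    ∃ ξ : ℕ, 1 ≤ ξ ∧ ξ ≤ p - 1 ∧ (p : ℤ_[p]) ∣ x - ξ := by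
  obtain ⟨ξ, hξp, hξ⟩ := exists_mem_range x
  rw [maximalIdeal_eq_span_p, Ideal.mem_span_singleton] at hξ
  have hξ0 : ξ ≠ 0 := by
    rintro rfl
    exact norm_eq_one_iff_not_dvd.mp hx (by simpa using hξ)
  exact ⟨ξ, by omega, by omega, hξ⟩

theorem exists_pow_eq_of_norm_sub_lt {n : ℕ} {b c : ℤ_[p]}
    (h : ‖c ^ n - b‖ < ‖(n : ℤ_[p]) * c ^ (n - 1)‖ ^ 2) :
    ∃ z : ℤ_[p], z ^ n = b ∧ ‖z - c‖ < ‖(n : ℤ_[p]) * c ^ (n - 1)‖ := by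
  obtain ⟨z, hz, hzc, -⟩ :=
    hensels_lemma (F := X ^ n - C b) (a := c) (by simpa [derivative_X_pow] using h)
  exact ⟨z, by simpa [sub_eq_zero] using hz, by simpa [derivative_X_pow] using hzc⟩

theorem exists_pow_eq_of_coprime {m : ℕ} (hm : m.Coprime p) {b c : ℤ_[p]} (hc : ‖c‖ = 1)
    (h : (p : ℤ_[p]) ∣ c ^ m - b) : ∃ z : ℤ_[p], z ^ m = b ∧ (p : ℤ_[p]) ∣ z - c := by
  have hderiv : ‖(m : ℤ_[p]) * c ^ (m - 1)‖ = 1 := by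
    rw [norm_mul, norm_pow, hc, one_pow, mul_one, norm_natCast_eq_one_iff]
    exact hm.symm
  obtain ⟨z, hz, hzc⟩ := exists_pow_eq_of_norm_sub_lt (b := b) (c := c) (n := m)
    (by rwa [hderiv, one_pow, norm_lt_one_iff_dvd])
  rw [hderiv, norm_lt_one_iff_dvd] at hzc
  exact ⟨z, hz, hzc⟩

theorem exists_pow_p_eq (hp : Odd p) {b c : ℤ_[p]} (hc : ‖c‖ = 1)
    (h : (p : ℤ_[p]) ^ 2 ∣ b - c ^ p) : ∃ y : ℤ_[p], y ^ p = b ∧ (p : ℤ_[p]) ∣ y - c := by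
  obtain ⟨t, ht⟩ := h
  -- The Newton step `c + p * t / c ^ (p - 1)`, simplified using `c ^ (p - 1) ≡ 1 [mod p]`.
  set c' := c + p * t
  have hc'c : (p : ℤ_[p]) ∣ c' - c := ⟨t, by ring⟩
  have hc' : ‖c'‖ = 1 := norm_eq_one_of_dvd_sub hc hc'c
  have hcube : (p : ℤ_[p]) ^ 3 ∣ c' ^ p - b := by
    have hsplit : c' ^ p - b = ((c + p * t) ^ p - c ^ p - p ^ 2 * c ^ (p - 1) * t)
        + p ^ 2 * t * (c ^ (p - 1) - 1) := by
      linear_combination -ht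
    rw [hsplit]
    refine dvd_add (cube_dvd_add_mul_pow_sub_sub hp c t) ?_
    rw [pow_succ]
    exact mul_dvd_mul (dvd_mul_right _ _) (dvd_pow_sub_one_sub_one_of_norm_eq_one hc)
  have hderiv : ‖(p : ℤ_[p]) * c' ^ (p - 1)‖ = (p : ℝ)⁻¹ := by
    rw [norm_mul, norm_pow, hc', one_pow, mul_one, norm_p]
  have hp0 : (0 : ℝ) < (p : ℝ)⁻¹ := inv_pos.mpr (mod_cast (Fact.out : p.Prime).pos)
  have hp1 : (p : ℝ)⁻¹ < 1 := inv_lt_one_of_one_lt₀ (mod_cast (Fact.out : p.Prime).one_lt)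
  obtain ⟨y, hy, hyc'⟩ := exists_pow_eq_of_norm_sub_lt (n := p) (b := b) (c := c') (by
    rw [hderiv]
    calc ‖c' ^ p - b‖ ≤ (p : ℝ)⁻¹ ^ 3 := norm_le_inv_pow_of_dvd hcube
      _ < (p : ℝ)⁻¹ ^ 2 := pow_lt_pow_right_of_lt_one₀ hp0 hp1 (by norm_num))
  rw [hderiv] at hyc'
  exact ⟨y, hy, by simpa using dvd_add ((norm_lt_one_iff_dvd _).mp (hyc'.trans hp1)) hc'c⟩

theorem exists_pow_p_pow_eq (hp : Odd p) (s : ℕ) {b c : ℤ_[p]} (hc : ‖c‖ = 1)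
    (h : (p : ℤ_[p]) ^ (s + 1) ∣ b - c ^ p ^ s) :
    ∃ y : ℤ_[p], y ^ p ^ s = b ∧ (p : ℤ_[p]) ∣ y - c := by
  induction s generalizing b with
  | zero => exact ⟨b, pow_one b, by simpa using h⟩
  | succ s ih =>
    have hcs : ‖c ^ p ^ s‖ = 1 := by rw [norm_pow, hc, one_pow]
    rw [pow_succ p s, pow_mul] at h
    obtain ⟨y₁, rfl, hy₁⟩ := exists_pow_p_eq hp hcs ((pow_dvd_pow _ (by omega)).trans h)
    have hy₁s : (p : ℤ_[p]) ^ (s + 1) ∣ c ^ p ^ s - y₁ :=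
      pow_dvd_sub_of_pow_succ_dvd_pow_sub_pow prime_p hp (dvd_sub_comm.mp hy₁)
        (norm_eq_one_iff_not_dvd.mp hcs) (dvd_sub_comm.mp h)
    obtain ⟨y, rfl, hyc⟩ := ih (dvd_sub_comm.mp hy₁s)
    exact ⟨y, by rw [pow_succ, pow_mul], hyc⟩

theorem exists_pow_eq_iff (hp : Odd p) {m : ℕ} (hm : m.Coprime p) (s : ℕ) {a a₀ : ℤ_[p]}
    (ha : ‖a‖ = 1) (ha₀ : (p : ℤ_[p]) ∣ a - a₀) :
    (∃ x : ℤ_[p], ‖x‖ = 1 ∧ x ^ (m * p ^ s) = a) ↔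
      (∃ ξ : ℕ, 1 ≤ ξ ∧ ξ ≤ p - 1 ∧ (p : ℤ_[p]) ∣ (ξ : ℤ_[p]) ^ (m * p ^ s) - a) ∧
        (p : ℤ_[p]) ^ (s + 1) ∣ a - a₀ ^ p ^ s := by
  constructor
  · rintro ⟨x, hx, rfl⟩
    obtain ⟨ξ, hξ1, hξp, hxξ⟩ := exists_nat_dvd_sub_of_norm_eq_one hx
    refine ⟨⟨ξ, hξ1, hξp, (dvd_sub_comm.mp hxξ).trans (sub_dvd_pow_sub_pow _ _ _)⟩, ?_⟩
    rw [pow_mul] at ha₀ ⊢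
    have hm₀ : (p : ℤ_[p]) ∣ x ^ m - a₀ := by
      simpa using dvd_add (dvd_sub_comm.mp (dvd_pow_p_pow_sub_self (x ^ m) s)) ha₀
    exact dvd_sub_pow_of_dvd_sub hm₀ s
  · rintro ⟨⟨ξ, hξ1, hξp, hξ⟩, hs⟩
    have ha₀1 : ‖a₀‖ = 1 := norm_eq_one_of_dvd_sub ha (dvd_sub_comm.mp ha₀)
    obtain ⟨y, rfl, -⟩ := exists_pow_p_pow_eq hp s ha₀1 hs
    have hξ1 : ‖(ξ : ℤ_[p])‖ = 1 :=
      norm_natCast_eq_one_iff.mpr (Nat.coprime_of_lt_prime (by omega) (by omega) Fact.out)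
    have hξy : (p : ℤ_[p]) ∣ (ξ : ℤ_[p]) ^ m - y := by
      rw [pow_mul] at hξ
      simpa using dvd_add
        (dvd_add (dvd_sub_comm.mp (dvd_pow_p_pow_sub_self ((ξ : ℤ_[p]) ^ m) s)) hξ)
        (dvd_pow_p_pow_sub_self y s)
    obtain ⟨z, rfl, hz⟩ := exists_pow_eq_of_coprime hm hξ1 hξy
    exact ⟨z, norm_eq_one_of_dvd_sub hξ1 hz, pow_mul z m _⟩

theorem exists_padic_pow_eq_coe_iff (k : ℕ) (a : ℤ_[p]) :
    (∃ x : ℚ_[p], ‖x‖ = 1 ∧ x ^ k = a) ↔ ∃ x : ℤ_[p], ‖x‖ = 1 ∧ x ^ k = a :=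
  ⟨fun ⟨x, hx, h⟩ => ⟨⟨x, hx.le⟩, hx, Subtype.ext h⟩,
    fun ⟨x, hx, h⟩ => ⟨x, by simpa using hx, by rw [← coe_pow, h]⟩⟩

end PadicInt

theorem padic_monomial_solvability_general (p : ℕ) [Fact p.Prime] (hp : 3 ≤ p)
    (m s k : ℕ) (hm : Nat.Coprime m p) (hkdef : k = m * p ^ s)
    (a : ℚ_[p]) (ha : ‖a‖ = 1)
    (a₀ : ℕ)
    (hclose : ‖a - (a₀ : ℚ_[p])‖ < 1) :
    (∃ x : ℚ_[p], ‖x‖ = 1 ∧ x ^ k = a) ↔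
      ((∃ ξ : ℕ, 1 ≤ ξ ∧ ξ ≤ p - 1 ∧ ‖(ξ : ℚ_[p]) ^ k - a‖ < 1) ∧
        ‖a - (a₀ : ℚ_[p]) ^ (p ^ s)‖ < (p : ℝ) ^ (-(s : ℤ))) := by
  obtain ⟨a, rfl⟩ : ∃ a' : ℤ_[p], (a' : ℚ_[p]) = a := ⟨⟨a, ha.le⟩, rfl⟩
  subst hkdef
  have hodd : Odd p := (Fact.out : p.Prime).odd_of_ne_two (by omega)
  have key := PadicInt.exists_pow_eq_iff hodd hm s (a₀ := a₀) (by simpa using ha)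
    (by rw [← PadicInt.norm_lt_one_iff_dvd]; exact_mod_cast hclose)
  simp only [← PadicInt.norm_lt_one_iff_dvd, ← PadicInt.norm_lt_zpow_neg_iff_dvd] at key
  rw [PadicInt.exists_padic_pow_eq_coe_iff]
  exact_mod_cast key

theorem padic_monomial_solvability (p : ℕ) [Fact p.Prime] (hp : 3 ≤ p)
    (m s k : ℕ) (hm : Nat.Coprime m p) (hkdef : k = m * p ^ s)
    (a : ℚ_[p]) (ha : ‖a‖ = 1)
    (a₀ : ℕ) (ha₀ : 1 ≤ a₀) (ha₀' : a₀ ≤ p - 1)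
    (hclose : ‖a - (a₀ : ℚ_[p])‖ < 1) :
    (∃ x : ℚ_[p], ‖x‖ = 1 ∧ x ^ k = a) ↔
      ((∃ ξ : ℕ, 1 ≤ ξ ∧ ξ ≤ p - 1 ∧ ‖(ξ : ℚ_[p]) ^ k - a‖ < 1) ∧
        ‖a - (a₀ : ℚ_[p]) ^ (p ^ s)‖ < (p : ℝ) ^ (-(s : ℤ))) :=
  padic_monomial_solvability_general p hp m s k hm hkdef a ha a₀ hclose
end

section
/- Let p ≥ 3 be prime, k = m·p^s with gcd(m,p)=1, s ≥ 0, a ∈ ℤ_p^* with first digit a₀, f: ℤ_p → ℤ_p p^s-Lipschitz, and ε ∈ ℚ_p with |ε|_p < |k|_p^2. If F(x) = x^k - a + ε·f(x) has a root x* ∈ ℤ_p, then |a - a₀^{p^s}|_p < p^{-s}. -/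
/-!
Modulo `p` the root satisfies `x ^ k ≡ a ≡ a₀`, and since Frobenius is the identity on `𝔽_p`,
`x ^ k = (x ^ m) ^ (p ^ s) ≡ x ^ m`; hence `x ^ m ≡ a₀ (mod p)`. Raising a congruence mod `p`
to the power `p ^ s` improves it to one mod `p ^ (s + 1)`, so `x ^ k ≡ a₀ ^ (p ^ s)` modulo
`p ^ (s + 1)`. Finally `a - x ^ k = ε f(x)` has norm at most `‖ε‖ < ‖k‖ ^ 2 ≤ p ^ (-s)`.
-/

variable {p : ℕ} [Fact p.Prime]

namespace PadicInt

theorem norm_lt_one_iff_toZMod_eq_zero (z : ℤ_[p]) : ‖z‖ < 1 ↔ toZMod z = 0 := by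
  rw [← RingHom.mem_ker, ker_toZMod, IsLocalRing.mem_maximalIdeal, mem_nonunits]

theorem norm_sub_lt_one_of_norm_pow_sub_lt_one {x y : ℤ_[p]} (s : ℕ)
    (h : ‖x ^ p ^ s - y‖ < 1) : ‖x - y‖ < 1 := by
  rw [norm_lt_one_iff_toZMod_eq_zero] at h ⊢
  simpa only [map_sub, map_pow, ZMod.pow_card_pow] using h

theorem norm_pow_sub_pow_le {x y : ℤ_[p]} (h : ‖x - y‖ < 1) (s : ℕ) :
    ‖x ^ p ^ s - y ^ p ^ s‖ ≤ (p : ℝ) ^ (-(s + 1 : ℕ) : ℤ) := by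
  rw [norm_le_pow_iff_mem_span_pow, Ideal.mem_span_singleton]
  exact dvd_sub_pow_of_dvd_sub ((norm_lt_one_iff_dvd _).1 h) s

theorem norm_pow_mul_sub_pow_le {x y : ℤ_[p]} (m s : ℕ) (h : ‖x ^ (m * p ^ s) - y‖ < 1) :
    ‖x ^ (m * p ^ s) - y ^ p ^ s‖ ≤ (p : ℝ) ^ (-(s + 1 : ℕ) : ℤ) := by
  rw [pow_mul] at h ⊢
  exact norm_pow_sub_pow_le (norm_sub_lt_one_of_norm_pow_sub_lt_one s h) s

end PadicInt

namespace Padic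

theorem norm_natCast_le_one (n : ℕ) : ‖(n : ℚ_[p])‖ ≤ 1 := by
  simpa using norm_int_le_one (p := p) n

theorem norm_natCast_mul_pow_le (m s : ℕ) :
    ‖((m * p ^ s : ℕ) : ℚ_[p])‖ ≤ (p : ℝ) ^ (-(s : ℤ)) := by
  push_cast
  rw [norm_mul, norm_p_pow]
  exact mul_le_of_le_one_left (by positivity) (norm_natCast_le_one m)

theorem norm_pow_mul_sub_pow_lt {x y : ℚ_[p]} (hx : ‖x‖ ≤ 1) (hy : ‖y‖ ≤ 1) (m s : ℕ)
    (h : ‖x ^ (m * p ^ s) - y‖ < 1) :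
    ‖x ^ (m * p ^ s) - y ^ p ^ s‖ < (p : ℝ) ^ (-(s : ℤ)) := by
  have hp : (1 : ℝ) < p := mod_cast (Fact.out : p.Prime).one_lt
  have hle := PadicInt.norm_pow_mul_sub_pow_le (x := ⟨x, hx⟩) (y := ⟨y, hy⟩) m s h
  refine hle.trans_lt (zpow_lt_zpow_right₀ hp ?_)
  omega

end Padic

theorem padic_perturbed_root_necessary_general (p : ℕ) [Fact p.Prime]
    (m s k : ℕ) (hkdef : k = m * p ^ s)
    (a : ℚ_[p])
    (a₀ : ℕ)
    (hclose : ‖a - (a₀ : ℚ_[p])‖ < 1)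
    (f : ℚ_[p] → ℚ_[p])
    (hf1 : ∀ x : ℚ_[p], ‖x‖ ≤ 1 → ‖f x‖ ≤ 1)
    (ε : ℚ_[p]) (hε : ‖ε‖ < ‖(k : ℚ_[p])‖ ^ 2)
    (hroot : ∃ x : ℚ_[p], ‖x‖ ≤ 1 ∧ x ^ k - a + ε * f x = 0) :
    ‖a - (a₀ : ℚ_[p]) ^ (p ^ s)‖ < (p : ℝ) ^ (-(s : ℤ)) := by
  obtain ⟨x, hx, hroot⟩ := hroot
  have hεf : ‖ε * f x‖ < (p : ℝ) ^ (-(s : ℤ)) :=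
    calc ‖ε * f x‖ ≤ ‖ε‖ := by
          rw [norm_mul]; exact mul_le_of_le_one_right (norm_nonneg _) (hf1 x hx)
      _ < ‖(k : ℚ_[p])‖ ^ 2 := hε
      _ ≤ ‖(k : ℚ_[p])‖ :=
          pow_le_of_le_one (norm_nonneg _) (Padic.norm_natCast_le_one k) two_ne_zero
      _ ≤ _ := hkdef ▸ Padic.norm_natCast_mul_pow_le m s
  have hxk : x ^ k = a - ε * f x := by linear_combination hroot
  have hxk_close : ‖x ^ k - a₀‖ < 1 := by
    have hpow : (p : ℝ) ^ (-(s : ℤ)) ≤ 1 :=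
      zpow_le_one_of_nonpos₀ (mod_cast (Fact.out : p.Prime).one_lt.le) (by omega)
    rw [hxk, sub_right_comm, sub_eq_add_neg]
    refine (Padic.nonarchimedean _ _).trans_lt (max_lt hclose ?_)
    rw [norm_neg]
    exact hεf.trans_le hpow
  have hfrob : ‖x ^ k - (a₀ : ℚ_[p]) ^ p ^ s‖ < (p : ℝ) ^ (-(s : ℤ)) := by
    subst hkdef
    exact Padic.norm_pow_mul_sub_pow_lt hx (Padic.norm_natCast_le_one a₀) m s hxk_close
  calc ‖a - (a₀ : ℚ_[p]) ^ p ^ s‖ = ‖ε * f x + (x ^ k - (a₀ : ℚ_[p]) ^ p ^ s)‖ := by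
        rw [hxk]; ring_nf
    _ ≤ max ‖ε * f x‖ ‖x ^ k - (a₀ : ℚ_[p]) ^ p ^ s‖ := Padic.nonarchimedean _ _
    _ < _ := max_lt hεf hfrob

theorem padic_perturbed_root_necessary (p : ℕ) [Fact p.Prime] (hp : 3 ≤ p)
    (m s k : ℕ) (hm : Nat.Coprime m p) (hkdef : k = m * p ^ s)
    (a : ℚ_[p]) (ha : ‖a‖ = 1)
    (a₀ : ℕ) (ha₀ : 1 ≤ a₀) (ha₀' : a₀ ≤ p - 1)
    (hclose : ‖a - (a₀ : ℚ_[p])‖ < 1)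
    (f : ℚ_[p] → ℚ_[p])
    (hf1 : ∀ x : ℚ_[p], ‖x‖ ≤ 1 → ‖f x‖ ≤ 1)
    (hf2 : ∀ x y : ℚ_[p], ‖x‖ ≤ 1 → ‖y‖ ≤ 1 →
      ‖f x - f y‖ ≤ (p : ℝ) ^ s * ‖x - y‖)
    (ε : ℚ_[p]) (hε : ‖ε‖ < ‖(k : ℚ_[p])‖ ^ 2)
    (hroot : ∃ x : ℚ_[p], ‖x‖ ≤ 1 ∧ x ^ k - a + ε * f x = 0) :
    ‖a - (a₀ : ℚ_[p]) ^ (p ^ s)‖ < (p : ℝ) ^ (-(s : ℤ)) :=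
  padic_perturbed_root_necessary_general p m s k hkdef a a₀ hclose f hf1 ε hε hroot
end

section
/- Let p ≥ 3 be prime, k = m·p^s with gcd(m,p)=1, s ≥ 0. Let P(x) = x^k + ∑_{j=1}^{k} a^{(j)} x^{k-j} with a^{(j)} ∈ ℤ_p, |a^{(k)}|_p = 1, and max_{1 ≤ j < k} |a^{(j)}|_p < p^{-2s}. Let a₀ be the first digit of a^{(k)}. Then P has a root in ℚ_p if and only if: (i) there exists ξ ∈ {1,...,p-1} with |ξ^k + a^{(k)}|_p < 1, and (ii) |a^{(k)} - a₀^{p^s}|_p < p^{-s}. -/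
/-!
Split `P = (X ^ k + a⁽ᵏ⁾) + D`, where every coefficient of `D` has norm at most `p ^ (-2s-1)`.
Since `‖k‖ = p ^ (-s)`, Hensel's lemma shows that `P` has a root as soon as the binomial
`X ^ k + a⁽ᵏ⁾` has one, and conversely a root of `P` is a unit with `x ^ k ≡ -a⁽ᵏ⁾` modulo
`p ^ (2s+1)`.

The key estimate is `‖u ^ p - 1‖ = ‖u - 1‖ / p` for `‖u - 1‖ < 1` and odd `p`. For a root `x`,
Fermat gives `-x ^ m ≡ a₀` modulo `p`, and the estimate applied to `-x ^ m / a₀` yields (ii);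
reducing `x` modulo `p` yields (i). Conversely, (ii) says `v = a⁽ᵏ⁾ / a₀ ^ p ^ s ≡ 1` modulo
`p ^ (s+1)`; such a `v` is a `p ^ s`-th power, its `p`-th roots being extracted one at a time by
Hensel's lemma. Then `-a⁽ᵏ⁾ = (-a₀ w) ^ p ^ s`, and by (i) and `p ∤ m`, Hensel's lemma gives an
exact `m`-th root of `-a₀ w`.
-/

open Finset Polynomial

theorem norm_pow_le_one_of_norm_le_one {R : Type*} [SeminormedRing R] [NormOneClass R] {x : R}
    (hx : ‖x‖ ≤ 1) (n : ℕ) : ‖x ^ n‖ ≤ 1 :=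
  (norm_pow_le x n).trans (pow_le_one₀ (norm_nonneg _) hx)

theorem norm_add_eq_left_of_norm_lt {S : Type*} [SeminormedAddGroup S] [IsUltrametricDist S]
    {x y : S} (h : ‖y‖ < ‖x‖) : ‖x + y‖ = ‖x‖ := by
  rw [IsUltrametricDist.norm_add_eq_max_of_norm_ne_norm h.ne', max_eq_left h.le]

theorem norm_pow_sub_pow_le_norm_sub {R : Type*} [NormedCommRing R] [NormOneClass R]
    [IsUltrametricDist R] {b c : R} (hb : ‖b‖ ≤ 1) (hc : ‖c‖ ≤ 1) (n : ℕ) :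
    ‖b ^ n - c ^ n‖ ≤ ‖b - c‖ := by
  rw [← geom_sum₂_mul]
  refine (norm_mul_le _ _).trans (mul_le_of_le_one_left (norm_nonneg _) ?_)
  refine IsUltrametricDist.norm_sum_le_of_forall_le_of_nonneg zero_le_one fun i _ => ?_
  exact (norm_mul_le _ _).trans <| mul_le_one₀ (norm_pow_le_one_of_norm_le_one hb i)
    (norm_nonneg _) (norm_pow_le_one_of_norm_le_one hc _)

section RootsOfMonic

variable {K : Type*} [NormedDivisionRing K] [IsUltrametricDist K]

theorem norm_le_one_of_pow_add_sum_eq_zero {n : ℕ} {c : ℕ → K}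
    (hc : ∀ j, 1 ≤ j → j ≤ n → ‖c j‖ ≤ 1) {x : K}
    (hx : x ^ n + ∑ j ∈ Icc 1 n, c j * x ^ (n - j) = 0) : ‖x‖ ≤ 1 := by
  by_contra! h
  obtain _ | n := n
  · simp at hx
  have hsum : ‖∑ j ∈ Icc 1 (n + 1), c j * x ^ (n + 1 - j)‖ ≤ ‖x‖ ^ n :=
    IsUltrametricDist.norm_sum_le_of_forall_le_of_nonneg (by positivity) fun j hj => by
      obtain ⟨hj1, hjn⟩ := mem_Icc.1 hj
      rw [norm_mul, norm_pow]
      exact mul_le_of_le_one_left (by positivity) (hc j hj1 hjn) |>.trans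
        (pow_le_pow_right₀ h.le (by omega))
  rw [eq_neg_of_add_eq_zero_right hx, norm_neg, norm_pow] at hsum
  exact (pow_lt_pow_right₀ h (Nat.lt_succ_self n)).not_ge hsum

theorem norm_pow_add_le_of_pow_add_sum_eq_zero {k : ℕ} (hk : k ≠ 0) {a : ℕ → K} {ε : ℝ}
    (hε : 0 ≤ ε) (ha : ∀ j, 1 ≤ j → j < k → ‖a j‖ ≤ ε) {x : K} (hx1 : ‖x‖ ≤ 1)
    (hx : x ^ k + ∑ j ∈ Icc 1 k, a j * x ^ (k - j) = 0) : ‖x ^ k + a k‖ ≤ ε := by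
  rw [← Ico_add_one_right_eq_Icc, sum_Ico_succ_top (Nat.one_le_iff_ne_zero.2 hk), Nat.sub_self,
    pow_zero, mul_one, add_left_comm, add_comm, ← eq_neg_iff_add_eq_zero] at hx
  rw [hx, norm_neg]
  refine IsUltrametricDist.norm_sum_le_of_forall_le_of_nonneg hε fun j hj => ?_
  obtain ⟨hj1, hjk⟩ := mem_Ico.1 hj
  rw [norm_mul, norm_pow]
  exact (mul_le_of_le_one_right (norm_nonneg _) (pow_le_one₀ (norm_nonneg _) hx1)).trans
    (ha j hj1 hjk)

end RootsOfMonic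

namespace Polynomial

variable {R : Type*} [NormedRing R] [IsUltrametricDist R]

theorem norm_eval_le_of_forall_norm_coeff_le [NormOneClass R] {P : R[X]} {ε : ℝ} (hε : 0 ≤ ε)
    (hP : ∀ i, ‖P.coeff i‖ ≤ ε) {t : R} (ht : ‖t‖ ≤ 1) : ‖P.eval t‖ ≤ ε := by
  rw [eval_eq_sum_range]
  refine IsUltrametricDist.norm_sum_le_of_forall_le_of_nonneg hε fun i _ => ?_
  exact (norm_mul_le _ _).trans <|
    (mul_le_of_le_one_right (norm_nonneg _) (norm_pow_le_one_of_norm_le_one ht i)).trans (hP i)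

theorem norm_derivative_eval_le_of_forall_norm_coeff_le [NormOneClass R] {P : R[X]} {ε : ℝ}
    (hε : 0 ≤ ε) (hP : ∀ i, ‖P.coeff i‖ ≤ ε) {t : R} (ht : ‖t‖ ≤ 1) :
    ‖P.derivative.eval t‖ ≤ ε := by
  refine norm_eval_le_of_forall_norm_coeff_le hε (fun i => ?_) ht
  rw [coeff_derivative]
  refine (norm_mul_le _ _).trans (mul_le_of_le_one_right (norm_nonneg _) ?_ |>.trans (hP _))
  exact_mod_cast IsUltrametricDist.norm_natCast_le_one R (i + 1)

theorem norm_coeff_sum_C_mul_X_pow_le {ι : Type*} {s : Finset ι} {c : ι → R} {e : ι → ℕ}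
    {ε : ℝ} (hε : 0 ≤ ε) (hc : ∀ j ∈ s, ‖c j‖ ≤ ε) (i : ℕ) :
    ‖(∑ j ∈ s, C (c j) * X ^ e j).coeff i‖ ≤ ε := by
  rw [finsetSum_coeff]
  refine IsUltrametricDist.norm_sum_le_of_forall_le_of_nonneg hε fun j hj => ?_
  rw [coeff_C_mul_X_pow]
  split_ifs
  · exact hc j hj
  · simpa using hε

end Polynomial

theorem mul_sq_dvd_one_add_pow_prime_sub_one_sub {R : Type*} [CommRing R] {p : ℕ}
    (hp : p.Prime) (hp2 : p ≠ 2) {e : R} (he : (p : R) ∣ e) :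
    (p : R) * e ^ 2 ∣ (1 + e) ^ p - 1 - p * e := by
  obtain ⟨n, rfl⟩ : ∃ n, p = n + 2 := ⟨p - 2, by have := hp.two_le; omega⟩
  have hn : n ≠ 0 := by rintro rfl; exact hp2 rfl
  rw [add_comm 1 e, add_pow, sum_range_succ', sum_range_succ']
  simp only [zero_add, pow_zero, pow_one, one_pow, mul_one, Nat.choose_zero_right,
    Nat.choose_one_right, Nat.cast_one]
  rw [add_sub_cancel_right, mul_comm e, add_sub_cancel_right]
  refine dvd_sum fun i hi => ?_
  rw [mul_comm _ (e ^ 2)]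
  rcases (Nat.lt_succ_iff.1 (mem_range.1 hi)).lt_or_eq with hin | rfl
  · exact mul_dvd_mul (pow_dvd_pow e (by omega))
      (Nat.cast_dvd_cast (hp.dvd_choose_self (by omega) (by omega)))
  · rw [Nat.choose_self, Nat.cast_one, mul_one, show e ^ (i + 1 + 1) = e ^ 2 * e ^ i by ring]
    exact mul_dvd_mul_left _ (he.trans (dvd_pow_self e hn))

namespace Padic

variable {p : ℕ} [hp : Fact p.Prime]

theorem exists_eval_eq_zero_of_norm_lt {F : ℚ_[p][X]} (hF : ∀ i, ‖F.coeff i‖ ≤ 1) {x₀ : ℚ_[p]}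
    (hx₀ : ‖x₀‖ ≤ 1) (h : ‖F.eval x₀‖ < ‖F.derivative.eval x₀‖ ^ 2) :
    ∃ x, F.eval x = 0 ∧ ‖x - x₀‖ < ‖F.derivative.eval x₀‖ := by
  obtain ⟨G, rfl⟩ := (mem_lifts (f := PadicInt.Coe.ringHom) F).1 <|
    (lifts_iff_coeff_lifts F).2 fun i => ⟨⟨F.coeff i, hF i⟩, rfl⟩
  obtain ⟨z₀, rfl⟩ : ∃ z₀ : ℤ_[p], (z₀ : ℚ_[p]) = x₀ := ⟨⟨x₀, hx₀⟩, rfl⟩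
  have eval_coe : ∀ (H : ℤ_[p][X]) (z : ℤ_[p]),
      (H.map PadicInt.Coe.ringHom).eval (z : ℚ_[p]) = H.eval z := fun H z => by
    rw [eval_map]; exact eval₂_at_apply _ _
  rw [derivative_map, eval_coe, eval_coe] at h
  rw [derivative_map, eval_coe]
  obtain ⟨z, hz, hdist, -⟩ := hensels_lemma (F := G) (a := z₀)
    (by simpa only [coe_aeval_eq_eval, PadicInt.norm_def] using h)
  refine ⟨z, ?_, ?_⟩
  · rw [eval_coe, ← coe_aeval_eq_eval, hz, PadicInt.coe_zero]
  · simpa only [coe_aeval_eq_eval, PadicInt.norm_def, PadicInt.coe_sub] using hdist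

theorem exists_eval_add_eq_zero_of_norm_coeff_le {G D : ℚ_[p][X]} (hG : ∀ i, ‖G.coeff i‖ ≤ 1)
    {ε : ℝ} (hD : ∀ i, ‖D.coeff i‖ ≤ ε) {t : ℚ_[p]} (ht : ‖t‖ ≤ 1) (hGt : G.eval t = 0)
    (hε : ε < ‖G.derivative.eval t‖ ^ 2) : ∃ x, (G + D).eval x = 0 := by
  have hε₀ : 0 ≤ ε := (norm_nonneg _).trans (hD 0)
  have hG' : ‖G.derivative.eval t‖ ≤ 1 :=
    norm_derivative_eval_le_of_forall_norm_coeff_le zero_le_one hG ht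
  have hεG : ε < ‖G.derivative.eval t‖ :=
    hε.trans_le (pow_le_of_le_one (norm_nonneg _) hG' two_ne_zero)
  have hderiv : ‖(G + D).derivative.eval t‖ = ‖G.derivative.eval t‖ := by
    rw [derivative_add, eval_add]
    exact norm_add_eq_left_of_norm_lt
      ((norm_derivative_eval_le_of_forall_norm_coeff_le hε₀ hD ht).trans_lt hεG)
  have hcoeff : ∀ i, ‖(G + D).coeff i‖ ≤ 1 := fun i => by
    rw [coeff_add]
    exact (nonarchimedean _ _).trans (max_le (hG i) ((hD i).trans (hεG.le.trans hG')))
  obtain ⟨x, hx, -⟩ := exists_eval_eq_zero_of_norm_lt hcoeff ht <| by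
    rw [hderiv, eval_add, hGt, zero_add]
    exact (norm_eval_le_of_forall_norm_coeff_le hε₀ hD ht).trans_lt hε
  exact ⟨x, hx⟩

theorem norm_coeff_X_pow_sub_C_le {n : ℕ} {c : ℚ_[p]} (hc : ‖c‖ ≤ 1) (i : ℕ) :
    ‖(X ^ n - C c).coeff i‖ ≤ 1 := by
  rw [coeff_sub, sub_eq_add_neg]
  refine (nonarchimedean _ _).trans (max_le ?_ ?_)
  · rw [coeff_X_pow]; split_ifs <;> simp
  · rw [norm_neg, coeff_C]; split_ifs <;> simp [hc]

theorem exists_pow_eq_of_norm_sub_lt {n : ℕ} {c x₀ : ℚ_[p]} (hc : ‖c‖ ≤ 1) (hx₀ : ‖x₀‖ ≤ 1)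
    (h : ‖x₀ ^ n - c‖ < ‖(n : ℚ_[p]) * x₀ ^ (n - 1)‖ ^ 2) :
    ∃ x, x ^ n = c ∧ ‖x - x₀‖ < ‖(n : ℚ_[p]) * x₀ ^ (n - 1)‖ := by
  have hderiv : (X ^ n - C c).derivative = C (n : ℚ_[p]) * X ^ (n - 1) := by
    rw [derivative_sub, derivative_X_pow, derivative_C, sub_zero]
  obtain ⟨x, hx, hdist⟩ := exists_eval_eq_zero_of_norm_lt (norm_coeff_X_pow_sub_C_le (n := n) hc)
    hx₀ (by simpa [hderiv] using h)
  exact ⟨x, by simpa [sub_eq_zero] using hx, by simpa [hderiv] using hdist⟩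

theorem exists_pow_add_sum_eq_zero_of_pow_eq_neg {k : ℕ} (hk : k ≠ 0) {a : ℕ → ℚ_[p]}
    (hak : ‖a k‖ = 1) {ε : ℝ} (hε₀ : 0 ≤ ε) (ha : ∀ j, 1 ≤ j → j < k → ‖a j‖ ≤ ε)
    (hε : ε < ‖(k : ℚ_[p])‖ ^ 2) {t : ℚ_[p]} (ht : t ^ k = -a k) :
    ∃ x, x ^ k + ∑ j ∈ Icc 1 k, a j * x ^ (k - j) = 0 := by
  have ht1 : ‖t‖ = 1 := by
    rwa [← pow_eq_one_iff_of_nonneg (norm_nonneg t) hk, ← norm_pow, ht, norm_neg]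
  obtain ⟨x, hx⟩ := exists_eval_add_eq_zero_of_norm_coeff_le (G := X ^ k - C (-a k))
    (D := ∑ j ∈ Ico 1 k, C (a j) * X ^ (k - j)) (norm_coeff_X_pow_sub_C_le (by rw [norm_neg, hak]))
    (norm_coeff_sum_C_mul_X_pow_le hε₀ fun j hj => ha j (mem_Ico.1 hj).1 (mem_Ico.1 hj).2)
    ht1.le (by simp [ht]) <| by
      rwa [derivative_sub, derivative_X_pow, derivative_C, sub_zero, eval_mul, eval_C, eval_pow,
        eval_X, norm_mul, norm_pow, ht1, one_pow, mul_one]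
  refine ⟨x, ?_⟩
  rw [← Ico_add_one_right_eq_Icc, sum_Ico_succ_top (Nat.one_le_iff_ne_zero.2 hk)]
  simp only [eval_add, eval_sub, eval_pow, eval_X, eval_C, eval_finsetSum, eval_mul] at hx
  rw [← hx, Nat.sub_self, pow_zero, mul_one]
  ring

theorem norm_one_add_pow_prime_sub_one_sub_le (hp2 : p ≠ 2) {e : ℚ_[p]} (he : ‖e‖ < 1) :
    ‖(1 + e) ^ p - 1 - p * e‖ ≤ ‖e‖ ^ 2 / p := by
  obtain ⟨E, rfl⟩ : ∃ E : ℤ_[p], (E : ℚ_[p]) = e := ⟨⟨e, he.le⟩, rfl⟩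
  obtain ⟨S, hS⟩ := mul_sq_dvd_one_add_pow_prime_sub_one_sub hp.out hp2
    ((PadicInt.norm_lt_one_iff_dvd E).1 he)
  have hS' : (1 + E : ℚ_[p]) ^ p - 1 - p * E = p * (E : ℚ_[p]) ^ 2 * S := by
    exact_mod_cast congrArg ((↑) : ℤ_[p] → ℚ_[p]) hS
  rw [hS', norm_mul, norm_mul, norm_p, norm_pow, inv_mul_eq_div]
  exact mul_le_of_le_one_right (by positivity) S.norm_le_one

theorem norm_pow_prime_sub_one (hp2 : p ≠ 2) {u : ℚ_[p]} (hu : ‖u - 1‖ < 1) :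
    ‖u ^ p - 1‖ = ‖u - 1‖ / p := by
  obtain ⟨e, rfl⟩ : ∃ e, 1 + e = u := ⟨u - 1, add_sub_cancel _ _⟩
  rw [add_sub_cancel_left] at hu ⊢
  rcases eq_or_ne e 0 with rfl | he
  · simp
  have hpe : ‖(p : ℚ_[p]) * e‖ = ‖e‖ / p := by rw [norm_mul, norm_p, inv_mul_eq_div]
  have hrest : ‖(1 + e) ^ p - 1 - p * e‖ < ‖(p : ℚ_[p]) * e‖ := by
    rw [hpe]
    refine (norm_one_add_pow_prime_sub_one_sub_le hp2 hu).trans_lt ?_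
    gcongr
    · exact_mod_cast hp.out.pos
    exact pow_lt_self_of_lt_one₀ (norm_pos_iff.2 he) hu one_lt_two
  rw [← hpe, ← norm_add_eq_left_of_norm_lt hrest]
  ring_nf

theorem norm_pow_prime_pow_sub_one (hp2 : p ≠ 2) {u : ℚ_[p]} (hu : ‖u - 1‖ < 1) (s : ℕ) :
    ‖u ^ p ^ s - 1‖ = ‖u - 1‖ / p ^ s := by
  induction s with
  | zero => simp
  | succ s ih =>
    have hlt : ‖u ^ p ^ s - 1‖ < 1 := by
      rw [ih]
      exact (div_le_self (norm_nonneg _) (one_le_pow₀ (mod_cast hp.out.one_le))).trans_lt hu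
    rw [pow_succ, pow_mul, norm_pow_prime_sub_one hp2 hlt, ih, div_div, pow_succ]

theorem exists_pow_prime_eq_of_norm_sub_one_le (hp2 : p ≠ 2) {v : ℚ_[p]}
    (hv : ‖v - 1‖ ≤ ((p : ℝ) ^ 2)⁻¹) : ∃ w, w ^ p = v ∧ ‖w - 1‖ < 1 := by
  have hp1 : (1 : ℝ) < p := by exact_mod_cast hp.out.one_lt
  have hp0 : (p : ℚ_[p]) ≠ 0 := by exact_mod_cast hp.out.ne_zero
  -- Hensel's lemma does not apply at `1`; it does after one Newton step, at `1 + (v - 1) / p`.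
  set e := (v - 1) / p
  have hpe : p * e = v - 1 := mul_div_cancel₀ _ hp0
  have he : ‖e‖ ≤ (p : ℝ)⁻¹ := by
    rw [norm_div, norm_p, div_inv_eq_mul, ← le_div_iff₀ (by positivity), div_eq_mul_inv,
      ← mul_inv, ← sq]
    exact hv
  have he1 : ‖e‖ < 1 := he.trans_lt (inv_lt_one_of_one_lt₀ hp1)
  have hx₀ : ‖1 + e‖ = 1 := by
    rw [norm_add_eq_left_of_norm_lt (by rwa [norm_one]), norm_one]
  have hderiv : ‖(p : ℚ_[p]) * (1 + e) ^ (p - 1)‖ = (p : ℝ)⁻¹ := by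
    rw [norm_mul, norm_pow, hx₀, one_pow, mul_one, norm_p]
  have hvle : ‖v‖ ≤ 1 := by
    simpa using (nonarchimedean (v - 1) 1).trans
      (max_le (hv.trans (inv_le_one_of_one_le₀ (one_le_pow₀ hp1.le))) norm_one.le)
  obtain ⟨w, hw, hdist⟩ := exists_pow_eq_of_norm_sub_lt hvle hx₀.le <| by
    rw [hderiv, show (1 + e) ^ p - v = (1 + e) ^ p - 1 - p * e by rw [hpe]; ring]
    calc ‖(1 + e) ^ p - 1 - p * e‖ ≤ ‖e‖ ^ 2 / p := norm_one_add_pow_prime_sub_one_sub_le hp2 he1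
      _ ≤ (p : ℝ)⁻¹ ^ 2 / p := by gcongr
      _ < (p : ℝ)⁻¹ ^ 2 := div_lt_self (by positivity) hp1
  refine ⟨w, hw, ?_⟩
  rw [hderiv] at hdist
  calc ‖w - 1‖ = ‖(w - (1 + e)) + e‖ := by ring_nf
    _ ≤ max ‖w - (1 + e)‖ ‖e‖ := nonarchimedean _ _
    _ < 1 := max_lt (hdist.trans (inv_lt_one_of_one_lt₀ hp1)) he1

theorem exists_pow_prime_pow_eq_of_norm_sub_one_le (hp2 : p ≠ 2) {s : ℕ} {v : ℚ_[p]}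
    (hv : ‖v - 1‖ ≤ ((p : ℝ) ^ (s + 1))⁻¹) : ∃ w, w ^ p ^ s = v ∧ ‖w - 1‖ < 1 := by
  have hp1 : (1 : ℝ) < p := by exact_mod_cast hp.out.one_lt
  induction s generalizing v with
  | zero => exact ⟨v, pow_one v, hv.trans_lt (by simpa using inv_lt_one_of_one_lt₀ hp1)⟩
  | succ s ih =>
    obtain ⟨w₁, rfl, hw₁⟩ := exists_pow_prime_eq_of_norm_sub_one_le hp2
      (hv.trans (inv_anti₀ (by positivity) (pow_le_pow_right₀ hp1.le (by omega))))
    obtain ⟨w, rfl, hw⟩ := ih <| by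
      rw [norm_pow_prime_sub_one hp2 hw₁, div_le_iff₀ (by positivity)] at hv
      rwa [pow_succ, mul_inv, inv_mul_cancel_right₀ (by positivity)] at hv
    exact ⟨w, by rw [pow_succ, pow_mul], hw⟩

theorem norm_pow_prime_pow_sub_self_lt_one {y : ℚ_[p]} (hy : ‖y‖ ≤ 1) (s : ℕ) :
    ‖y ^ p ^ s - y‖ < 1 := by
  obtain ⟨Y, rfl⟩ : ∃ Y : ℤ_[p], (Y : ℚ_[p]) = y := ⟨⟨y, hy⟩, rfl⟩
  have : Y ^ p ^ s - Y ∈ IsLocalRing.maximalIdeal ℤ_[p] := by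
    rw [← PadicInt.ker_toZMod, RingHom.mem_ker, map_sub, map_pow, ZMod.pow_card_pow, sub_self]
  exact_mod_cast PadicInt.mem_nonunits.1 this

theorem exists_natCast_norm_sub_lt_one {x : ℚ_[p]} (hx : ‖x‖ ≤ 1) :
    ∃ ξ < p, ‖x - ξ‖ < 1 := by
  obtain ⟨X, rfl⟩ : ∃ X : ℤ_[p], (X : ℚ_[p]) = x := ⟨⟨x, hx⟩, rfl⟩
  exact ⟨_, X.zmodRepr_lt_p, by exact_mod_cast PadicInt.mem_nonunits.1 X.sub_zmodRepr_mem⟩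

theorem exists_natCast_pow_add_norm_lt_one {k : ℕ} (hk : k ≠ 0) {c x : ℚ_[p]} (hc : ‖c‖ = 1)
    (hx : ‖x‖ ≤ 1) (hxc : ‖x ^ k + c‖ < 1) :
    ∃ ξ : ℕ, 1 ≤ ξ ∧ ξ ≤ p - 1 ∧ ‖(ξ : ℚ_[p]) ^ k + c‖ < 1 := by
  obtain ⟨ξ, hξp, hxξ⟩ := exists_natCast_norm_sub_lt_one hx
  have hξ : ‖(ξ : ℚ_[p]) ^ k + c‖ < 1 := by
    calc ‖(ξ : ℚ_[p]) ^ k + c‖ = ‖((ξ : ℚ_[p]) ^ k - x ^ k) + (x ^ k + c)‖ := by ring_nf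
      _ ≤ max ‖(ξ : ℚ_[p]) ^ k - x ^ k‖ ‖x ^ k + c‖ := nonarchimedean _ _
      _ < 1 := by
        refine max_lt ((norm_pow_sub_pow_le_norm_sub ?_ hx k).trans_lt ?_) hxc
        · exact IsUltrametricDist.norm_natCast_le_one ℚ_[p] ξ
        · rwa [norm_sub_rev]
  refine ⟨ξ, Nat.one_le_iff_ne_zero.2 ?_, by omega, hξ⟩
  rintro rfl
  simp [zero_pow hk, hc] at hξ

theorem norm_sub_pow_prime_pow_lt_of_norm_pow_add_lt (hp2 : p ≠ 2) {m s : ℕ} {a c x : ℚ_[p]}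
    (hc : ‖c‖ = 1) (hca : ‖c - a‖ < 1) (hx : ‖x‖ ≤ 1)
    (hxc : ‖x ^ (m * p ^ s) + c‖ < (p : ℝ) ^ (-(s : ℤ))) :
    ‖c - a ^ p ^ s‖ < (p : ℝ) ^ (-(s : ℤ)) := by
  have ha : ‖a‖ = 1 := (norm_eq_of_norm_sub_lt_left (hc ▸ hca)).symm.trans hc
  have ha0 : a ≠ 0 := norm_ne_zero_iff.1 (ha ▸ one_ne_zero)
  have hps : (p : ℝ) ^ (-(s : ℤ)) ≤ 1 :=
    zpow_le_one_of_nonpos₀ (by exact_mod_cast hp.out.one_le) (by omega)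
  have hxk : x ^ (m * p ^ s) = (x ^ m) ^ p ^ s := pow_mul x m (p ^ s)
  -- By Fermat, `-x ^ m ≡ -(x ^ m) ^ p ^ s ≡ c ≡ a` modulo `p`.
  have hya : ‖-x ^ m / a - 1‖ < 1 := by
    rw [div_sub_one ha0, norm_div, ha, div_one]
    calc ‖-x ^ m - a‖ = ‖((x ^ m) ^ p ^ s - x ^ m) + -(x ^ (m * p ^ s) + c) + (c - a)‖ := by
          rw [hxk]; ring_nf
      _ ≤ max (max ‖(x ^ m) ^ p ^ s - x ^ m‖ ‖x ^ (m * p ^ s) + c‖) ‖c - a‖ := by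
          refine (nonarchimedean _ _).trans (max_le_max ?_ le_rfl)
          simpa only [norm_neg] using
            nonarchimedean ((x ^ m) ^ p ^ s - x ^ m) (-(x ^ (m * p ^ s) + c))
      _ < 1 := max_lt (max_lt (norm_pow_prime_pow_sub_self_lt_one
          (norm_pow_le_one_of_norm_le_one hx m) s) (hxc.trans_le hps)) hca
  have key := norm_pow_prime_pow_sub_one hp2 hya s
  rw [div_pow, (hp.out.odd_of_ne_two hp2).pow.neg_pow, ← hxk, div_sub_one (pow_ne_zero _ ha0),
    norm_div, norm_pow, ha, one_pow, div_one] at key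
  calc ‖c - a ^ p ^ s‖ = ‖(x ^ (m * p ^ s) + c) + (-x ^ (m * p ^ s) - a ^ p ^ s)‖ := by ring_nf
    _ ≤ max ‖x ^ (m * p ^ s) + c‖ ‖-x ^ (m * p ^ s) - a ^ p ^ s‖ := nonarchimedean _ _
    _ < (p : ℝ) ^ (-(s : ℤ)) := by
      refine max_lt hxc ?_
      rw [key, zpow_neg, zpow_natCast, ← one_div]
      exact div_lt_div_of_pos_right hya (pow_pos (by exact_mod_cast hp.out.pos) s)

theorem exists_pow_eq_neg_of_norm_sub_pow_prime_pow_lt (hp2 : p ≠ 2) {m s : ℕ}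
    (hm : p.Coprime m) {a b c : ℚ_[p]} (hc : ‖c‖ = 1) (hca : ‖c - a‖ < 1)
    (hb : ‖b ^ (m * p ^ s) + c‖ < 1) (h : ‖c - a ^ p ^ s‖ < (p : ℝ) ^ (-(s : ℤ))) :
    ∃ t, t ^ (m * p ^ s) = -c := by
  have ha : ‖a‖ = 1 := (norm_eq_of_norm_sub_lt_left (hc ▸ hca)).symm.trans hc
  have ha0 : a ^ p ^ s ≠ 0 := pow_ne_zero _ (norm_ne_zero_iff.1 (ha ▸ one_ne_zero))
  have hm0 : m ≠ 0 := by
    rintro rfl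
    exact hp.out.one_lt.ne' (Nat.coprime_zero_right p |>.1 hm)
  have hv : ‖c / a ^ p ^ s - 1‖ ≤ ((p : ℝ) ^ (s + 1))⁻¹ := by
    rw [div_sub_one ha0, norm_div, norm_pow, ha, one_pow, div_one,
      show ((p : ℝ) ^ (s + 1))⁻¹ = (p : ℝ) ^ (-((s : ℤ) + 1)) by rw [zpow_neg]; norm_cast,
      norm_le_pow_iff_norm_lt_pow_add_one]
    convert h using 3
    ring
  obtain ⟨w, hw, hw1⟩ := exists_pow_prime_pow_eq_of_norm_sub_one_le hp2 hv
  have hwn : ‖w‖ = 1 := (norm_eq_of_norm_sub_lt_right (by rwa [norm_one])).trans norm_one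
  have hz : (-(a * w)) ^ p ^ s = -c := by
    rw [(hp.out.odd_of_ne_two hp2).pow.neg_pow, mul_pow, hw, mul_div_cancel₀ _ ha0]
  have hbk : ‖(b ^ p ^ s) ^ m‖ = 1 := by
    rw [← pow_mul, mul_comm, (norm_eq_of_norm_add_lt_right (by rwa [hc])).trans hc]
  have hb1 : ‖b ^ p ^ s‖ = 1 := by
    rwa [norm_pow, pow_eq_one_iff_of_nonneg (norm_nonneg _) hm0] at hbk
  obtain ⟨t, ht, -⟩ := exists_pow_eq_of_norm_sub_lt (n := m) (c := -(a * w)) (x₀ := b ^ p ^ s)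
    (by rw [norm_neg, norm_mul, ha, hwn, one_mul]) hb1.le <| by
      rw [norm_mul, norm_pow, hb1, one_pow, mul_one, norm_natCast_eq_one_iff.2 hm, one_pow]
      calc ‖(b ^ p ^ s) ^ m - -(a * w)‖ = ‖(b ^ (m * p ^ s) + c) + -(c - a) + a * (w - 1)‖ := by
            rw [← pow_mul, mul_comm (p ^ s)]; ring_nf
        _ ≤ max (max ‖b ^ (m * p ^ s) + c‖ ‖c - a‖) ‖a * (w - 1)‖ := by
            refine (nonarchimedean _ _).trans (max_le_max ?_ le_rfl)
            simpa only [norm_neg] using nonarchimedean (b ^ (m * p ^ s) + c) (-(c - a))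
        _ < 1 := max_lt (max_lt hb hca) (by rwa [norm_mul, ha, one_mul])
  exact ⟨t, by rw [pow_mul, ht, hz]⟩

end Padic

theorem padic_poly_root_iff_general (p : ℕ) [Fact p.Prime] (hp : 3 ≤ p)
    (m s k : ℕ) (hm : Nat.Coprime m p) (hkdef : k = m * p ^ s)
    (a : ℕ → ℚ_[p]) (haint : ∀ j, 1 ≤ j → j ≤ k → ‖a j‖ ≤ 1)
    (hak : ‖a k‖ = 1)
    (hsmall : ∀ j, 1 ≤ j → j < k → ‖a j‖ < (p : ℝ) ^ (-(2 * s : ℤ)))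
    (a₀ : ℕ)
    (hclose : ‖a k - (a₀ : ℚ_[p])‖ < 1) :
    (∃ x : ℚ_[p], x ^ k + ∑ j ∈ Finset.Icc 1 k, a j * x ^ (k - j) = 0) ↔
      ((∃ ξ : ℕ, 1 ≤ ξ ∧ ξ ≤ p - 1 ∧ ‖(ξ : ℚ_[p]) ^ k + a k‖ < 1) ∧
        ‖a k - (a₀ : ℚ_[p]) ^ (p ^ s)‖ < (p : ℝ) ^ (-(s : ℤ))) := by
  subst hkdef
  have hp2 : p ≠ 2 := by omega
  have hp1 : (1 : ℝ) < p := by exact_mod_cast (Fact.out : p.Prime).one_lt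
  have hk : m * p ^ s ≠ 0 :=
    mul_ne_zero (by rintro rfl; simp_all [Nat.coprime_zero_left]) (by positivity)
  set ε : ℝ := (p : ℝ) ^ (-(2 * s + 1 : ℤ))
  have hsmall' : ∀ j, 1 ≤ j → j < m * p ^ s → ‖a j‖ ≤ ε := fun j hj1 hjk => by
    rw [Padic.norm_le_pow_iff_norm_lt_pow_add_one]
    convert hsmall j hj1 hjk using 2
    ring
  constructor
  · rintro ⟨x, hx⟩
    have hx1 := norm_le_one_of_pow_add_sum_eq_zero haint hx
    have hxk := (norm_pow_add_le_of_pow_add_sum_eq_zero hk (by positivity) hsmall' hx1 hx).trans_lt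
      (zpow_lt_zpow_right₀ hp1 (by omega : -(2 * s + 1 : ℤ) < -s))
    exact ⟨Padic.exists_natCast_pow_add_norm_lt_one hk hak hx1
      (hxk.trans_le (zpow_le_one_of_nonpos₀ hp1.le (by omega))),
      Padic.norm_sub_pow_prime_pow_lt_of_norm_pow_add_lt hp2 hak hclose hx1 hxk⟩
  · rintro ⟨⟨ξ, -, -, hξ⟩, hii⟩
    obtain ⟨t, ht⟩ := Padic.exists_pow_eq_neg_of_norm_sub_pow_prime_pow_lt hp2 hm.symm hak hclose
      hξ hii
    refine Padic.exists_pow_add_sum_eq_zero_of_pow_eq_neg hk hak (by positivity) hsmall' ?_ ht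
    rw [Nat.cast_mul, Nat.cast_pow, norm_mul, Padic.norm_natCast_eq_one_iff.2 hm.symm, one_mul,
      Padic.norm_p_pow, ← zpow_natCast, ← zpow_mul]
    exact zpow_lt_zpow_right₀ hp1 (by omega)

theorem padic_poly_root_iff (p : ℕ) [Fact p.Prime] (hp : 3 ≤ p)
    (m s k : ℕ) (hm : Nat.Coprime m p) (hkdef : k = m * p ^ s)
    (a : ℕ → ℚ_[p]) (haint : ∀ j, 1 ≤ j → j ≤ k → ‖a j‖ ≤ 1)
    (hak : ‖a k‖ = 1)
    (hsmall : ∀ j, 1 ≤ j → j < k → ‖a j‖ < (p : ℝ) ^ (-(2 * s : ℤ)))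
    (a₀ : ℕ) (ha₀ : 1 ≤ a₀) (ha₀' : a₀ ≤ p - 1)
    (hclose : ‖a k - (a₀ : ℚ_[p])‖ < 1) :
    (∃ x : ℚ_[p], x ^ k + ∑ j ∈ Finset.Icc 1 k, a j * x ^ (k - j) = 0) ↔
      ((∃ ξ : ℕ, 1 ≤ ξ ∧ ξ ≤ p - 1 ∧ ‖(ξ : ℚ_[p]) ^ k + a k‖ < 1) ∧
        ‖a k - (a₀ : ℚ_[p]) ^ (p ^ s)‖ < (p : ℝ) ^ (-(s : ℤ))) :=
  padic_poly_root_iff_general p hp m s k hm hkdef a haint hak hsmall a₀ hclose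
end
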